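/- arXiv:1610.00144 — 5 statements merged into one kernel-verified Lean document; each statement's English description precedes it below -/
import Mathlib

section
/- Let f : V → V' be a k-linear map between vector spaces with bases B = B₀ ∪ B₁ ∪ B₂ (disjoint) and B' = B'₀ ∪ B'₁ (disjoint) satisfying: (W1) f(b) = 0 for all b ∈ B₀; (W2) f(B₁) ⊆ B'₁ and f restricted to B₁ is injective; (W3) for each b ∈ B₂, f(b) = b₀ + Σ_{c ∈ B₁(b)} f(c) for some b₀ ∈ B'₀ and some finite subset B₁(b) ⊆ B₁, and the assignment b ↦ b₀ is injective on B₂. Then B₀ is a k-basis of Ker f and f(B₁) ∪ {b₀ | b ∈ B₂} is a k-basis of Im f. -/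
/-!
With `u i = f (B i)` for `i ∈ ι₁` and `v b = B' (b₀ b)` for `b ∈ ι₂`, condition (W) says that
`f` sends the `ι₁ ⊕ ι₂`-part of `B` to `Sum.elim u (v + w)`, where `w b = ∑ c ∈ S b, u c` lies
in the span of `u`, while `Sum.elim u v` is part of the basis `B'` by the injectivity of `g`
and `b₀`. Such a triangular perturbation changes neither linear independence (modulo the span
of `u` the families `v` and `v + w` coincide) nor the span. Hence `f` is injective on the span
of the `ι₁ ⊕ ι₂`-part of `B` and kills the `ι₀`-part, which therefore spans the kernel, and the
image is spanned by `Sum.elim u v`.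
-/

open Submodule Set

section

variable {R M M' : Type*} [Ring R] [AddCommGroup M] [Module R M] [AddCommGroup M'] [Module R M']
  {ι κ : Type*}

theorem span_range_sumElim_add {u : ι → M} {v w : κ → M} (hw : ∀ b, w b ∈ span R (range u)) :
    span R (range (Sum.elim u (v + w))) = span R (range (Sum.elim u v)) := by
  simp only [Set.Sum.elim_range, span_union]
  apply le_antisymm <;> refine sup_le le_sup_left (span_le.2 ?_) <;> rintro _ ⟨b, rfl⟩
  · exact add_mem (mem_sup_right (subset_span ⟨b, rfl⟩)) (mem_sup_left (hw b))
  · rw [show v b = (v + w) b - w b by simp]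
    exact sub_mem (mem_sup_right (subset_span ⟨b, rfl⟩)) (mem_sup_left (hw b))

theorem LinearIndependent.sumElim_add {u : ι → M} {v w : κ → M}
    (h : LinearIndependent R (Sum.elim u v)) (hw : ∀ b, w b ∈ span R (range u)) :
    LinearIndependent R (Sum.elim u (v + w)) := by
  obtain ⟨hu, hv, hdisj⟩ := linearIndependent_sum.1 h
  set q := (span R (range u)).mkQ
  have hqv : LinearIndependent R (q ∘ v) := hv.map (by rw [ker_mkQ]; exact hdisj.symm)
  have hqvw : q ∘ (v + w) = q ∘ v := by
    funext b
    simp [q, (Quotient.mk_eq_zero _).2 (hw b)]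
  have hvw : LinearIndependent R (q ∘ (v + w)) := hqvw ▸ hqv
  refine linearIndependent_sum.2 ⟨hu, LinearIndependent.of_comp q hvw, ?_⟩
  simpa [q, ker_mkQ] using (range_ker_disjoint hvw).symm

namespace Module.Basis

variable (B : Basis (ι ⊕ κ) R M) {f : M →ₗ[R] M'}

theorem span_inl_eq_ker (h0 : ∀ i, f (B (Sum.inl i)) = 0)
    (hli : LinearIndependent R (f ∘ B ∘ Sum.inr)) :
    span R (range (B ∘ Sum.inl)) = LinearMap.ker f := by
  have hle : span R (range (B ∘ Sum.inl)) ≤ LinearMap.ker f := span_le.2 <| by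
    rintro _ ⟨i, rfl⟩
    exact h0 i
  refine le_antisymm hle fun x hx => ?_
  have hx' : x ∈ span R (range (B ∘ Sum.inl)) ⊔ span R (range (B ∘ Sum.inr)) := by
    rw [← span_union, ← Set.Sum.elim_range, Sum.elim_comp_inl_inr, B.span_eq]
    exact mem_top
  obtain ⟨a, ha, c, hc, rfl⟩ := mem_sup.1 hx'
  have hfa : f a = 0 := hle ha
  have hc0 : c = 0 :=
    disjoint_def.1 (range_ker_disjoint hli) c hc (by simpa [hfa] using hx)
  simpa [hc0] using ha

theorem range_eq_span_inr (h0 : ∀ i, f (B (Sum.inl i)) = 0) :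
    LinearMap.range f = span R (range (f ∘ B ∘ Sum.inr)) := by
  rw [LinearMap.range_eq_map, ← B.span_eq, map_span, ← range_comp, ← Sum.elim_comp_inl_inr (f ∘ B),
    Set.Sum.elim_range, span_union, sup_eq_right.2]
  · rfl
  · refine span_le.2 ?_
    rintro _ ⟨i, rfl⟩
    simp [h0]

end Module.Basis

end

/-- **Condition (W) determines the kernel and the image.**
Let `f : V → V'` be a `k`-linear map between vector spaces with bases `B` indexed by
`ι₀ ⊕ ι₁ ⊕ ι₂` and `B'` indexed by `ι'₀ ⊕ ι'₁`, satisfying: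
(W1) `f` kills the `ι₀`-part of `B`;
(W2) `f` maps the `ι₁`-part of `B` injectively to basis vectors in the `ι'₁`-part of `B'`;
(W3) for each `b ∈ ι₂`, `f(B b) = B'(b₀ b) + ∑_{c ∈ S b} f (B c)` with `b₀ b` in the
`ι'₀`-part, `S b ⊆ ι₁` finite, and `b ↦ b₀ b` injective.
Then the `ι₀`-part of `B` is a basis of `Ker f`, and the family consisting of the images
of the `ι₁`-part of `B` together with the vectors `B'(b₀ b)` is a basis of `Im f`. -/
theorem projective_leavitt_condition_W_ker_im_basis
    {k V V' : Type*} [Field k] [AddCommGroup V] [Module k V]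
    [AddCommGroup V'] [Module k V'] {ι₀ ι₁ ι₂ ι'₀ ι'₁ : Type*}
    (B : Module.Basis (ι₀ ⊕ ι₁ ⊕ ι₂) k V) (B' : Module.Basis (ι'₀ ⊕ ι'₁) k V')
    (f : V →ₗ[k] V')
    (g : ι₁ → ι'₁) (hg : Function.Injective g)
    (b₀ : ι₂ → ι'₀) (hb₀ : Function.Injective b₀)
    (S : ι₂ → Finset ι₁)
    (hW1 : ∀ i : ι₀, f (B (Sum.inl i)) = 0)
    (hW2 : ∀ i : ι₁, f (B (Sum.inr (Sum.inl i))) = B' (Sum.inr (g i)))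
    (hW3 : ∀ b : ι₂, f (B (Sum.inr (Sum.inr b))) =
      B' (Sum.inl (b₀ b)) + ∑ c ∈ S b, f (B (Sum.inr (Sum.inl c)))) :
    (LinearIndependent k fun i : ι₀ => B (Sum.inl i)) ∧
    Submodule.span k (Set.range fun i : ι₀ => B (Sum.inl i)) = LinearMap.ker f ∧
    (LinearIndependent k
      (Sum.elim (fun i : ι₁ => f (B (Sum.inr (Sum.inl i))))
        (fun b : ι₂ => B' (Sum.inl (b₀ b))))) ∧
    Submodule.span k (Set.range
      (Sum.elim (fun i : ι₁ => f (B (Sum.inr (Sum.inl i))))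
        (fun b : ι₂ => B' (Sum.inl (b₀ b))))) = LinearMap.range f := by
  set u : ι₁ → V' := fun i => f (B (Sum.inr (Sum.inl i)))
  set v : ι₂ → V' := fun b => B' (Sum.inl (b₀ b))
  set w : ι₂ → V' := fun b => ∑ c ∈ S b, u c
  have hw : ∀ b, w b ∈ span k (range u) := fun b =>
    sum_mem fun c _ => subset_span ⟨c, rfl⟩
  have hli : LinearIndependent k (Sum.elim u v) := by
    have huv : Sum.elim u v = B' ∘ Sum.elim (Sum.inr ∘ g) (Sum.inl ∘ b₀) := by
      ext (i | b) <;> simp [u, v, hW2]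
    rw [huv]
    exact B'.linearIndependent.comp _ ((Sum.inr_injective.comp hg).sumElim
      (Sum.inl_injective.comp hb₀) fun _ _ => Sum.inr_ne_inl)
  have hfB : f ∘ B ∘ Sum.inr = Sum.elim u (v + w) := by
    ext (i | b) <;> simp [u, v, w, hW3]
  refine ⟨B.linearIndependent.comp _ Sum.inl_injective, B.span_inl_eq_ker hW1 ?_, hli, ?_⟩
  · rw [hfB]
    exact hli.sumElim_add hw
  · rw [B.range_eq_span_inr hW1, hfB, span_range_sumElim_add hw]
end

section
/- Let Q be a finite quiver without sources (every vertex has at least one incoming arrow). Then for each vertex i and each integer l, there exists an associated pair (p, q) of paths in Q with t(p) = i and l(q) − l(p) = l. In particular the set Λ^l_i is nonempty. -/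
noncomputable section

/-- A finite quiver: finite sets of vertices and arrows, with source and target maps. -/
structure FQ where
  V : Type
  E : Type
  [fV : Fintype V]
  [fE : Fintype E]
  [dV : DecidableEq V]
  [dE : DecidableEq E]
  s : E → V
  t : E → V

attribute [instance] FQ.fV FQ.fE FQ.dV FQ.dE

/-- `Q` has no sources: every vertex admits an arrow terminating at it. -/
def FQ.NoSources (Q : FQ) : Prop := ∀ i : Q.V, ∃ e : Q.E, Q.t e = i

/-- The opposite quiver. -/
def FQ.op (Q : FQ) : FQ := { V := Q.V, E := Q.E, s := Q.t, t := Q.s }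

/-- Paths in the quiver `Q` from a vertex to a vertex; `cons p e he` is the path
`e ∘ p` obtained by composing an arrow `e` after the path `p` (paths are written
from right to left). -/
inductive QP (Q : FQ) : Q.V → Q.V → Type
  | nil (i : Q.V) : QP Q i i
  | cons {i j : Q.V} (p : QP Q i j) (e : Q.E) (he : Q.s e = j) : QP Q i (Q.t e)

namespace QP

variable {Q : FQ}

/-- The length of a path. -/
def length : ∀ {i j : Q.V}, QP Q i j → ℕ
  | _, _, .nil _ => 0
  | _, _, .cons p _ _ => length p + 1

/-- The first (rightmost) arrow of a path, if any. -/
def firstArrow : ∀ {i j : Q.V}, QP Q i j → Option Q.E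
  | _, _, .nil _ => none
  | _, _, .cons p e _ => some ((firstArrow p).getD e)

/-- The last (leftmost) arrow of a path, if any. -/
def lastArrow : ∀ {i j : Q.V}, QP Q i j → Option Q.E
  | _, _, .nil _ => none
  | _, _, .cons _ e _ => some e

/-- Transport of a path along an equality of its starting vertices. -/
def castSrc {i i' j : Q.V} (h : i = i') (p : QP Q i j) : QP Q i' j := h ▸ p

/-- Extend a path at its starting vertex by an arrow (`p ↦ p ∘ e`). -/
def preCons (e : Q.E) : ∀ {j : Q.V}, QP Q (Q.t e) j → QP Q (Q.s e) j
  | _, .nil _ => .cons (.nil (Q.s e)) e rfl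
  | _, .cons p f hf => .cons (preCons e p) f hf

lemma length_castSrc {i i' j : Q.V} (h : i = i') (p : QP Q i j) :
    (castSrc h p).length = p.length := by subst h; rfl

lemma length_preCons (e : Q.E) : ∀ {j : Q.V} (p : QP Q (Q.t e) j),
    (preCons e p).length = p.length + 1
  | _, .nil _ => by simp [preCons, length]
  | _, .cons p f hf => by
      show (QP.cons (preCons e p) f hf).length = _
      simp [length, length_preCons e p]

end QP

/-- With respect to a choice `asc` of an *associated* arrow terminating at each
non-source vertex, `IsAssoc Q asc a` says that the arrow `a` is the associated arrow
terminating at its target. -/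
def IsAssoc (Q : FQ) (asc : ∀ i : Q.V, (∃ e, Q.t e = i) → Q.E) (a : Q.E) : Prop :=
  asc (Q.t a) ⟨a, rfl⟩ = a

/-- `(p, q)` is an *associated pair*: the paths `p` and `q` start at the same vertex,
and either one of them is trivial, or their first arrows differ, or their common first
arrow is not associated. -/
def AssocPair (Q : FQ) (asc : ∀ i : Q.V, (∃ e, Q.t e = i) → Q.E)
    {i j j' : Q.V} (p : QP Q i j) (q : QP Q i j') : Prop :=
  ∀ a : Q.E, p.firstArrow = some a → q.firstArrow = some a → ¬ IsAssoc Q asc a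

lemma assocPair_nil_left {Q : FQ} {asc : ∀ i : Q.V, (∃ e, Q.t e = i) → Q.E}
    {i j : Q.V} (q : QP Q i j) : AssocPair Q asc (QP.nil i) q := by
  intro a h
  simp [QP.firstArrow] at h

lemma assocPair_nil_right {Q : FQ} {asc : ∀ i : Q.V, (∃ e, Q.t e = i) → Q.E}
    {i j : Q.V} (p : QP Q i j) : AssocPair Q asc p (QP.nil i) := by
  intro a _ h
  simp [QP.firstArrow] at h

/-- The index set `Λ^l_i` (for `i = x.i`): associated pairs `(p, q)` with
`t(p) = i` and `l(q) - l(p) = l`. -/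
structure Lam (Q : FQ) (asc : ∀ i : Q.V, (∃ e, Q.t e = i) → Q.E) (l : ℤ) where
  a : Q.V              -- the common starting vertex of `p` and `q`
  i : Q.V              -- the terminating vertex of `p`
  b : Q.V              -- the terminating vertex of `q`
  p : QP Q a i
  q : QP Q a b
  ok : AssocPair Q asc p q
  deg : (q.length : ℤ) - (p.length : ℤ) = l

instance {Q : FQ} {asc : ∀ i : Q.V, (∃ e, Q.t e = i) → Q.E} {l : ℤ} :
    DecidableEq (Lam Q asc l) := Classical.decEq _

/-! Without sources, following incoming arrows backwards from `i` yields paths of every length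
ending at `i`; with `q` trivial this settles `l ≤ 0`. For `l > 0` the backward walk from `i` is
eventually periodic on the finite vertex set, and `q` winds around its cycle so that its first
arrow differs from that of `p`. -/

namespace QP

variable {Q : FQ}

lemma firstArrow_castSrc {i i' j : Q.V} (h : i = i') (p : QP Q i j) :
    (castSrc h p).firstArrow = p.firstArrow := by subst h; rfl

lemma firstArrow_preCons (e : Q.E) : ∀ {j : Q.V} (p : QP Q (Q.t e) j),
    (preCons e p).firstArrow = some e
  | _, .nil _ => by simp [preCons, firstArrow]
  | _, .cons p f hf => by simp [preCons, firstArrow, firstArrow_preCons e p]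

end QP

lemma assocPair_of_firstArrow_ne {Q : FQ} {asc : ∀ i : Q.V, (∃ e, Q.t e = i) → Q.E}
    {i j j' : Q.V} {p : QP Q i j} {q : QP Q i j'} (h : p.firstArrow ≠ q.firstArrow) :
    AssocPair Q asc p q :=
  fun _ hp hq => absurd (hp.trans hq.symm) h

lemma Function.exists_iterate_mem_periodicPts {α : Type*} [Finite α] (g : α → α) (x : α) :
    ∃ j, g^[j] x ∈ Function.periodicPts g := by
  obtain ⟨m, n, hmn, heq⟩ := Set.finite_univ.exists_lt_map_eq_of_forall_mem
    (f := fun k => g^[k] x) (fun _ => Set.mem_univ _)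
  refine ⟨m, n - m, Nat.sub_pos_of_lt hmn, ?_⟩
  change g^[n - m] (g^[m] x) = g^[m] x
  rw [← Function.iterate_add_apply, Nat.sub_add_cancel hmn.le]
  exact heq.symm

section BackPath

variable {Q : FQ} (f : Q.V → Q.E) (hf : Function.LeftInverse Q.t f)

/-- Following the chosen incoming arrows `f` backwards from `v` for `n` steps, read as a
path `gⁿ v → ⋯ → g v → v` where `g = Q.s ∘ f`. -/
def backPath (v : Q.V) : (n : ℕ) → QP Q ((Q.s ∘ f)^[n] v) v
  | 0 => .nil v
  | n + 1 => QP.castSrc (Function.iterate_succ_apply' _ n v).symm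
      (QP.preCons (f ((Q.s ∘ f)^[n] v)) (QP.castSrc (hf _).symm (backPath v n)))

lemma length_backPath (v : Q.V) : ∀ n, (backPath f hf v n).length = n
  | 0 => by simp [backPath, QP.length]
  | n + 1 => by
      rw [backPath, QP.length_castSrc, QP.length_preCons, QP.length_castSrc,
        length_backPath v n]

lemma firstArrow_backPath_zero (v : Q.V) : (backPath f hf v 0).firstArrow = none := by
  simp [backPath, QP.firstArrow]

lemma firstArrow_backPath_succ (v : Q.V) (n : ℕ) :
    (backPath f hf v (n + 1)).firstArrow = some (f ((Q.s ∘ f)^[n] v)) := by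
  rw [backPath, QP.firstArrow_castSrc, QP.firstArrow_preCons]

end BackPath

lemma exists_path_length_eq {Q : FQ} (hQ : Q.NoSources) (v : Q.V) (n : ℕ) :
    ∃ (a : Q.V) (p : QP Q a v), p.length = n := by
  choose f hf using hQ
  exact ⟨_, backPath f hf v n, length_backPath f hf v n⟩

/-- With `x = gʲ v` the first point of the walk `v, g v, g² v, …` on a cycle, of length `L`,
`p` is the walk from `x` to `v` and `q` the walk of length `j + n` from `x = g^(j + L n) v`.
Their first arrows end at `g^(j - 1) v` and at the cycle point `g^(j + L n - 1) v`, which differ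
by minimality of `j`. -/
theorem exists_paths_firstArrow_ne {Q : FQ} (hQ : Q.NoSources) (v : Q.V) {n : ℕ} (hn : 0 < n) :
    ∃ (a b : Q.V) (p : QP Q a v) (q : QP Q a b),
      p.firstArrow ≠ q.firstArrow ∧ q.length = p.length + n := by
  classical
  choose f hf using hQ
  set g := Q.s ∘ f
  have hex := Function.exists_iterate_mem_periodicPts g v
  set j := Nat.find hex
  obtain ⟨L, hL, hper⟩ := Nat.find_spec hex
  have hnL : n ≤ L * n := Nat.le_mul_of_pos_left n hL
  have hstart : g^[j + n] (g^[L * n - n] v) = g^[j] v := by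
    rw [← Function.iterate_add_apply, show j + n + (L * n - n) = L * n + j by omega,
      Function.iterate_add_apply, (hper.mul_const n).eq]
  refine ⟨_, _, backPath f hf v j, QP.castSrc hstart (backPath f hf _ (j + n)), ?_,
    by rw [QP.length_castSrc, length_backPath, length_backPath]⟩
  rw [QP.firstArrow_castSrc, show j + n = j + n - 1 + 1 by omega, firstArrow_backPath_succ]
  obtain hj | ⟨k, hk⟩ : j = 0 ∨ ∃ k, j = k + 1 := by cases j <;> simp
  · rw [hj, firstArrow_backPath_zero]
    exact (Option.some_ne_none _).symm
  · rw [hk, firstArrow_backPath_succ]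
    intro heq
    have hcycle : g^[k] v = g^[k + 1 + n - 1] (g^[L * n - n] v) :=
      Function.LeftInverse.injective hf (Option.some_injective _ heq)
    refine Nat.find_min hex (show k < j by omega) ⟨L * n, by positivity, ?_⟩
    change g^[L * n] (g^[k] v) = g^[k] v
    simp only [← Function.iterate_add_apply] at hcycle ⊢
    convert hcycle.symm using 2
    omega

theorem lam_nonempty_general (Q : FQ) (hQ : Q.NoSources)
    (asc : ∀ i : Q.V, (∃ e, Q.t e = i) → Q.E)
    (i : Q.V) (l : ℤ) :
    ∃ (a b : Q.V) (p : QP Q a i) (q : QP Q a b),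
      AssocPair Q asc p q ∧ (q.length : ℤ) - (p.length : ℤ) = l := by
  obtain hl | hl := le_or_gt l 0
  · obtain ⟨a, p, hp⟩ := exists_path_length_eq hQ i (-l).toNat
    exact ⟨a, a, p, .nil a, assocPair_nil_right p, by simp only [QP.length]; omega⟩
  · obtain ⟨a, b, p, q, hne, hlen⟩ := exists_paths_firstArrow_ne hQ i (n := l.toNat) (by omega)
    exact ⟨a, b, p, q, assocPair_of_firstArrow_ne hne, by omega⟩

/-- **Non-emptiness of `Λ^l_i` (Lemma 2.2).**  Let `Q` be a finite quiver without
sources, with a choice `asc` of associated arrow terminating at each vertex.  Then for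
every vertex `i` and every integer `l` there is an associated pair `(p, q)` of paths in
`Q` with `t(p) = i` and `l(q) - l(p) = l`; that is, `Λ^l_i ≠ ∅`. -/
theorem lam_nonempty (Q : FQ) (hQ : Q.NoSources)
    (asc : ∀ i : Q.V, (∃ e, Q.t e = i) → Q.E)
    (hasc : ∀ (i : Q.V) (h : ∃ e, Q.t e = i), Q.t (asc i h) = i)
    (i : Q.V) (l : ℤ) :
    ∃ (a b : Q.V) (p : QP Q a i) (q : QP Q a b),
      AssocPair Q asc p q ∧ (q.length : ℤ) - (p.length : ℤ) = l :=
  lam_nonempty_general Q hQ asc i l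
end
end

section
/- Let Q be a finite quiver without sources and A = kQ/J². The maps δ^l in the projective Leavitt complex satisfy δ^{l+1} ∘ δ^l = 0 for all integers l, so P• = (P^l, δ^l) is a complex of projective A-modules. -/
noncomputable section

/-- Generators of the path algebra `kQ`. -/
inductive AGen (Q : FQ)
  | vtx (i : Q.V)
  | ar (e : Q.E)

/-- The defining relations of the radical square zero algebra `A = kQ/J²`:
the trivial paths are orthogonal idempotents summing to the unit, arrows are unital
with respect to the trivial paths at their endpoints, and any product of two arrows
vanishes. -/
inductive ARel (k : Type) [Field k] (Q : FQ) :
    FreeAlgebra k (AGen Q) → FreeAlgebra k (AGen Q) → Prop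
  | vtx_mul (i j : Q.V) :
      ARel k Q (FreeAlgebra.ι k (AGen.vtx i) * FreeAlgebra.ι k (AGen.vtx j))
        (if i = j then FreeAlgebra.ι k (AGen.vtx i) else 0)
  | sum_vtx : ARel k Q (∑ i : Q.V, FreeAlgebra.ι k (AGen.vtx i)) 1
  | vtx_ar (e : Q.E) :
      ARel k Q (FreeAlgebra.ι k (AGen.vtx (Q.t e)) * FreeAlgebra.ι k (AGen.ar e))
        (FreeAlgebra.ι k (AGen.ar e))
  | ar_vtx (e : Q.E) :
      ARel k Q (FreeAlgebra.ι k (AGen.ar e) * FreeAlgebra.ι k (AGen.vtx (Q.s e)))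
        (FreeAlgebra.ι k (AGen.ar e))
  | rad_sq (e f : Q.E) :
      ARel k Q (FreeAlgebra.ι k (AGen.ar e) * FreeAlgebra.ι k (AGen.ar f)) 0

/-- The radical square zero algebra `A = kQ/J²` of the finite quiver `Q`. -/
abbrev AlgA (k : Type) [Field k] (Q : FQ) := RingQuot (ARel k Q)

/-- The image `e_i` in `A` of the trivial path at the vertex `i`. -/
def vtxA (k : Type) [Field k] (Q : FQ) (i : Q.V) : AlgA k Q :=
  RingQuot.mkAlgHom k (ARel k Q) (FreeAlgebra.ι k (AGen.vtx i))

/-- The image `α` in `A` of an arrow `α`. -/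
def arA (k : Type) [Field k] (Q : FQ) (e : Q.E) : AlgA k Q :=
  RingQuot.mkAlgHom k (ARel k Q) (FreeAlgebra.ι k (AGen.ar e))

lemma arA_mul_vtxA (k : Type) [Field k] (Q : FQ) (e : Q.E) :
    arA k Q e * vtxA k Q (Q.s e) = arA k Q e := by
  have h := RingQuot.mkAlgHom_rel k (ARel.ar_vtx (k := k) (Q := Q) e)
  simpa [vtxA, arA, map_mul] using h

/-- The indecomposable projective left `A`-module `P_i = A e_i`. -/
def Pmod (k : Type) [Field k] (Q : FQ) (i : Q.V) : Submodule (AlgA k Q) (AlgA k Q) :=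
  Submodule.span (AlgA k Q) {vtxA k Q i}

lemma vtxA_mem (k : Type) [Field k] (Q : FQ) (i : Q.V) : vtxA k Q i ∈ Pmod k Q i :=
  Submodule.mem_span_singleton_self _

lemma arA_mem (k : Type) [Field k] (Q : FQ) (e : Q.E) {i : Q.V} (he : Q.s e = i) :
    arA k Q e ∈ Pmod k Q i := by
  subst he
  rw [← arA_mul_vtxA k Q e]
  simpa [smul_eq_mul] using
    Submodule.smul_mem (Pmod k Q (Q.s e)) (arA k Q e) (vtxA_mem k Q (Q.s e))

/-- The `l`-th component `P^l = ⊕_{i ∈ Q₀} P_i^{(Λ^l_i)}` of the projective Leavitt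
complex. -/
abbrev PL (k : Type) [Field k] (Q : FQ) (asc : ∀ i : Q.V, (∃ e, Q.t e = i) → Q.E)
    (l : ℤ) : Type :=
  Π₀ x : Lam Q asc l, ↥(Pmod k Q x.i)

instance PL.instAddCommGroup (k : Type) [Field k] (Q : FQ)
    (asc : ∀ i : Q.V, (∃ e, Q.t e = i) → Q.E) (l : ℤ) :
    AddCommGroup (PL k Q asc l) :=
  @DFinsupp.addCommGroup (Lam Q asc l) (fun x => ↥(Pmod k Q x.i)) (fun _ => inferInstance)
/-- The basis element `e_i ζ_{(p,q)}` of `P^l`, for `x = (p, q) ∈ Λ^l_i`. -/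
def zE {k : Type} [Field k] {Q : FQ} {asc : ∀ i : Q.V, (∃ e, Q.t e = i) → Q.E}
    {l : ℤ} (x : Lam Q asc l) : PL k Q asc l :=
  DFinsupp.single x ⟨vtxA k Q x.i, vtxA_mem k Q x.i⟩

/-- The basis element `α ζ_{(p,q)}` of `P^l`, for `x = (p, q) ∈ Λ^l_i` and an arrow
`α` with `s(α) = i`. -/
def zA {k : Type} [Field k] {Q : FQ} {asc : ∀ i : Q.V, (∃ e, Q.t e = i) → Q.E}
    {l : ℤ} (x : Lam Q asc l) (e : Q.E) (he : Q.s e = x.i) : PL k Q asc l :=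
  DFinsupp.single x ⟨arA k Q e, arA_mem k Q e he⟩

/-- The family of `A`-linear maps `δ^l : P^l → P^{l+1}` is *the differential of the
projective Leavitt complex* when it satisfies the defining formulas:
`δ^l(α ζ_{(p,q)}) = 0`; `δ^l(e_i ζ_{(βp̂, q)}) = β ζ_{(p̂, q)}`; and
`δ^l(e_i ζ_{(e_i, q)}) = ∑_{β : t(β) = i} β ζ_{(e_{s(β)}, qβ)}`. -/
def IsLeavittDiff (k : Type) [Field k] (Q : FQ)
    (asc : ∀ i : Q.V, (∃ e, Q.t e = i) → Q.E)
    (δ : ∀ l : ℤ, PL k Q asc l →ₗ[AlgA k Q] PL k Q asc (l + 1)) : Prop :=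
  (∀ (l : ℤ) (x : Lam Q asc l) (e : Q.E) (he : Q.s e = x.i), δ l (zA x e he) = 0) ∧
  (∀ (l : ℤ) (a j b : Q.V) (p' : QP Q a j) (e : Q.E) (he : Q.s e = j) (q : QP Q a b)
      (ok : AssocPair Q asc (QP.cons p' e he) q)
      (dg : (q.length : ℤ) - ((QP.cons p' e he).length : ℤ) = l)
      (ok' : AssocPair Q asc p' q)
      (dg' : (q.length : ℤ) - (p'.length : ℤ) = l + 1),
      δ l (zE ⟨a, Q.t e, b, QP.cons p' e he, q, ok, dg⟩) =
        zA (⟨a, j, b, p', q, ok', dg'⟩ : Lam Q asc (l + 1)) e he) ∧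
  (∀ (l : ℤ) (a b : Q.V) (q : QP Q a b)
      (ok : AssocPair Q asc (QP.nil a) q)
      (dg : (q.length : ℤ) - ((QP.nil a).length : ℤ) = l),
      δ l (zE ⟨a, a, b, QP.nil a, q, ok, dg⟩) =
        ∑ e : {e : Q.E // Q.t e = a},
          zA (⟨Q.s e.1, Q.s e.1, b, QP.nil (Q.s e.1),
                QP.preCons e.1 (QP.castSrc e.2.symm q),
                assocPair_nil_left _,
                by
                  simp only [QP.length_preCons, QP.length_castSrc, QP.length] at *
                  push_cast
                  omega⟩ : Lam Q asc (l + 1)) e.1 rfl)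
section Aux
variable {k : Type} [Field k] {Q : FQ}

lemma vtxA_idem (i : Q.V) : vtxA k Q i * vtxA k Q i = vtxA k Q i := by
  have h := RingQuot.mkAlgHom_rel k (ARel.vtx_mul (k := k) (Q := Q) i i)
  simpa [vtxA, map_mul] using h

lemma projective_Pmod (i : Q.V) : Module.Projective (AlgA k Q) (Pmod k Q i) := by
  refine Module.Projective.of_split (M := AlgA k Q) (Pmod k Q i).subtype
    { toFun := fun a => ⟨a * vtxA k Q i, by
        simpa [smul_eq_mul] using
          Submodule.smul_mem (Pmod k Q i) a (vtxA_mem k Q i)⟩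
      map_add' := by intro a b; ext; simp [add_mul]
      map_smul' := by intro r a; ext; simp [smul_eq_mul, mul_assoc] } ?_
  refine LinearMap.ext fun ⟨m, hm⟩ => ?_
  obtain ⟨a, ha⟩ := Submodule.mem_span_singleton.mp hm
  simp only [LinearMap.coe_comp, Function.comp_apply, Submodule.coe_subtype,
    LinearMap.coe_mk, AddHom.coe_mk, LinearMap.id_coe, id_eq]
  refine Subtype.ext ?_
  show m * vtxA k Q i = m
  rw [← ha, smul_eq_mul, mul_assoc, vtxA_idem]

variable {asc : ∀ i : Q.V, (∃ e, Q.t e = i) → Q.E}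

lemma delta_delta_zE (δ : ∀ l : ℤ, PL k Q asc l →ₗ[AlgA k Q] PL k Q asc (l + 1))
    (hδ : IsLeavittDiff k Q asc δ) (l : ℤ) (x : Lam Q asc l) :
    δ (l + 1) (δ l (zE x)) = 0 := by
  obtain ⟨a, i, b, p, q, ok, dg⟩ := x
  cases p with
  | nil =>
    rw [hδ.2.2 l a b q ok dg, map_sum]
    refine Finset.sum_eq_zero fun e _ => ?_
    exact hδ.1 (l + 1) _ e.1 rfl
  | cons p' e he =>
    have ok' : AssocPair Q asc p' q := by
      intro α hp' hq
      exact ok α (by simp [QP.firstArrow, hp']) hq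
    have dg' : (q.length : ℤ) - (p'.length : ℤ) = l + 1 := by
      simp only [QP.length] at dg; push_cast at dg ⊢; omega
    rw [hδ.2.1 l a _ b p' e he q ok dg ok' dg']
    exact hδ.1 (l + 1) _ e he

end Aux

/-- **The projective Leavitt complex is a complex of projective `A`-modules
(Definition 2.4).**  Let `Q` be a finite quiver without sources and `A = kQ/J²`.  For
any family of `A`-linear maps `δ^l : P^l → P^{l+1}` satisfying the defining formulas of
the projective Leavitt complex, one has `δ^{l+1} ∘ δ^l = 0` for all `l`; moreover each
component `P^l` is a projective `A`-module. -/
theorem projective_leavitt_complex_is_complex (k : Type) [Field k]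
    (Q : FQ) (hQ : Q.NoSources)
    (asc : ∀ i : Q.V, (∃ e, Q.t e = i) → Q.E)
    (hasc : ∀ (i : Q.V) (h : ∃ e, Q.t e = i), Q.t (asc i h) = i)
    (δ : ∀ l : ℤ, PL k Q asc l →ₗ[AlgA k Q] PL k Q asc (l + 1))
    (hδ : IsLeavittDiff k Q asc δ) :
    (∀ l : ℤ, (δ (l + 1)).comp (δ l) = 0) ∧
      ∀ l : ℤ, Module.Projective (AlgA k Q) (PL k Q asc l) := by
  constructor
  · intro l
    refine DFinsupp.lhom_ext fun x m => ?_
    obtain ⟨a, ha⟩ := Submodule.mem_span_singleton.mp m.2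
    have hm : DFinsupp.single x m = a • (zE x : PL k Q asc l) := by
      rw [zE, ← DFinsupp.single_smul]
      congr 1
      ext
      exact ha.symm
    simp only [LinearMap.comp_apply, hm, map_smul, LinearMap.zero_apply,
      delta_delta_zE δ hδ l x, smul_zero]
  · intro l
    have : ∀ x : Lam Q asc l, Module.Projective (AlgA k Q) (Pmod k Q x.i) :=
      fun x => projective_Pmod x.i
    infer_instance
end
end

section
/- Let Q be a finite quiver without sources. For each integer l, the set B^l₀ = {α ζ_{(p,q)} | i ∈ Q₀, (p,q) ∈ Λ^l_i, α ∈ Q₁ with s(α) = i} is a k-basis of Ker δ^l, and B^{l+1}₀ is a k-basis of Im δ^l. -/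
noncomputable section

/-!
Over `k`, `P^l` is spanned by the `e_i ζ_x` and the `α ζ_x`, and the latter are linearly
independent: the coefficient of an arrow `e` in `A = kQ/J²` is the `(1,0)` entry of the
two-dimensional representation of `A` in which `e` acts as `E₁₀` and every other arrow as `0`.

Since `δ` kills every `α ζ_x`, `Ker δ^l = span B^l₀` amounts to the linear independence of the
`δ(e_i ζ_x)`, which is triangular in the length of `p`. The `δ(e ζ_{(βp̂,q)}) = β ζ_{(p̂,q)}`
are distinct basis vectors. If `α` is the associated arrow at `a` (there is one because `Q` has
no sources), then `α ζ_{(e, qα)}` occurs in `δ(e ζ_y)` only for `y = (e_a, q)`, since `(α, qα)`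
is not an associated pair.

For the image, `β ζ_{(p,q)} = δ(e ζ_{(βp,q)})` unless `p` is trivial and `q = q'β` with `β`
associated; then it is `δ(e ζ_{(e, q')})` minus the terms `γ ζ_{(e, q'γ)}` with `γ ≠ β`, which
are of the first kind because the associated arrow at a vertex is unique.
-/

section RadicalSquareZero

variable (k : Type) [Field k] (Q : FQ)

theorem vtxA_mul_vtxA (i j : Q.V) :
    vtxA k Q i * vtxA k Q j = if i = j then vtxA k Q i else 0 := by
  have h := RingQuot.mkAlgHom_rel k (ARel.vtx_mul (k := k) (Q := Q) i j)
  rw [map_mul, apply_ite (RingQuot.mkAlgHom k (ARel k Q)), map_zero] at h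
  exact h

theorem sum_vtxA : ∑ i : Q.V, vtxA k Q i = 1 := by
  simpa [vtxA] using RingQuot.mkAlgHom_rel k (ARel.sum_vtx (k := k) (Q := Q))

theorem vtxA_mul_arA (i : Q.V) (e : Q.E) :
    vtxA k Q i * arA k Q e = if i = Q.t e then arA k Q e else 0 := by
  have h : vtxA k Q (Q.t e) * arA k Q e = arA k Q e := by
    simpa [vtxA, arA] using RingQuot.mkAlgHom_rel k (ARel.vtx_ar (k := k) (Q := Q) e)
  split_ifs with hi
  · rw [hi, h]
  · rw [← h, ← mul_assoc, vtxA_mul_vtxA, if_neg hi, zero_mul]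

theorem arA_mul_vtxA_eq_ite (e : Q.E) (j : Q.V) :
    arA k Q e * vtxA k Q j = if j = Q.s e then arA k Q e else 0 := by
  split_ifs with hj
  · rw [hj, arA_mul_vtxA]
  · rw [← arA_mul_vtxA k Q e, mul_assoc, vtxA_mul_vtxA, if_neg (Ne.symm hj), mul_zero]

theorem arA_mul_arA (e f : Q.E) : arA k Q e * arA k Q f = 0 := by
  simpa [arA] using RingQuot.mkAlgHom_rel k (ARel.rad_sq (k := k) (Q := Q) e f)

def gensA : Set (AlgA k Q) := Set.range (vtxA k Q) ∪ Set.range (arA k Q)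

theorem mul_mem_span_gensA {x y : AlgA k Q} (hx : x ∈ gensA k Q) (hy : y ∈ gensA k Q) :
    x * y ∈ Submodule.span k (gensA k Q) := by
  have hvtx (i : Q.V) : vtxA k Q i ∈ Submodule.span k (gensA k Q) :=
    Submodule.subset_span (Or.inl ⟨i, rfl⟩)
  have har (e : Q.E) : arA k Q e ∈ Submodule.span k (gensA k Q) :=
    Submodule.subset_span (Or.inr ⟨e, rfl⟩)
  rcases hx with ⟨i, rfl⟩ | ⟨e, rfl⟩ <;> rcases hy with ⟨j, rfl⟩ | ⟨f, rfl⟩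
  · rw [vtxA_mul_vtxA]; split_ifs <;> simp [hvtx]
  · rw [vtxA_mul_arA]; split_ifs <;> simp [har]
  · rw [arA_mul_vtxA_eq_ite]; split_ifs <;> simp [har]
  · simp [arA_mul_arA]

theorem span_gensA : Submodule.span k (gensA k Q) = ⊤ := by
  have hone : (1 : AlgA k Q) ∈ Submodule.span k (gensA k Q) := by
    rw [← sum_vtxA]
    exact Submodule.sum_mem _ fun i _ => Submodule.subset_span (Or.inl ⟨i, rfl⟩)
  have hmul : ∀ x y, x ∈ Submodule.span k (gensA k Q) → y ∈ Submodule.span k (gensA k Q) →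
      x * y ∈ Submodule.span k (gensA k Q) := by
    intro x y hx hy
    have := Submodule.mul_mem_mul hx hy
    rw [Submodule.span_mul_span] at this
    refine Submodule.span_le.mpr ?_ this
    rintro _ ⟨a, ha, b, hb, rfl⟩
    exact mul_mem_span_gensA k Q ha hb
  let B := (Submodule.span k (gensA k Q)).toSubalgebra hone hmul
  refine Submodule.eq_top_iff'.mpr fun a => ?_
  obtain ⟨x, rfl⟩ := RingQuot.mkAlgHom_surjective k (ARel k Q) a
  show _ ∈ B
  induction x using FreeAlgebra.induction with
  | grade0 c => simp [B.algebraMap_mem c]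
  | grade1 g =>
    cases g with
    | vtx i => exact Submodule.subset_span (Or.inl ⟨i, rfl⟩)
    | ar e => exact Submodule.subset_span (Or.inr ⟨e, rfl⟩)
  | mul x y hx hy => simpa using B.mul_mem hx hy
  | add x y hx hy => simpa using B.add_mem hx hy

def arrowRepGen (e : Q.E) : AGen Q → Matrix (Fin 2) (Fin 2) k
  | .vtx i => !![if i = Q.s e then 1 else 0, 0; 0, if i = Q.t e then 1 else 0]
  | .ar f => !![0, 0; if f = e then 1 else 0, 0]

theorem arrowRepGen_rel (e : Q.E) ⦃x y : FreeAlgebra k (AGen Q)⦄ (h : ARel k Q x y) :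
    FreeAlgebra.lift k (arrowRepGen k Q e) x = FreeAlgebra.lift k (arrowRepGen k Q e) y := by
  cases h <;> (try split_ifs) <;> ext a b <;>
    fin_cases a <;> fin_cases b <;> simp [arrowRepGen, ite_apply, Matrix.sum_apply] <;> grind

def arrowRep (e : Q.E) : AlgA k Q →ₐ[k] Matrix (Fin 2) (Fin 2) k :=
  RingQuot.liftAlgHom k ⟨FreeAlgebra.lift k (arrowRepGen k Q e), arrowRepGen_rel k Q e⟩

def arrowCoeff (e : Q.E) : AlgA k Q →ₗ[k] k :=
  (Matrix.entryLinearMap k k 1 0).comp (arrowRep k Q e).toLinearMap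

theorem arrowCoeff_arA (e f : Q.E) : arrowCoeff k Q e (arA k Q f) = if f = e then 1 else 0 := by
  simp [arrowCoeff, arrowRep, arA, arrowRepGen]

end RadicalSquareZero

theorem linearIndependent_of_triangular {ι R M : Type*} [Ring R] [AddCommGroup M] [Module R M]
    (v : ι → M) (r : ι → ℕ)
    (h : ∀ i, ∃ φ : M →ₗ[R] R, φ (v i) = 1 ∧ ∀ j, j ≠ i → r i ≤ r j → φ (v j) = 0) :
    LinearIndependent R v := by
  classical
  rw [linearIndependent_iff']
  intro s g hg
  suffices ∀ n, ∀ i ∈ s, r i = n → g i = 0 from fun i hi => this _ i hi rfl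
  intro n
  induction n using Nat.strong_induction_on with
  | _ n ih =>
    rintro i hi rfl
    obtain ⟨φ, hφi, hφ⟩ := h i
    have hsum := congrArg φ hg
    rw [map_sum, map_zero, Finset.sum_eq_single_of_mem i hi] at hsum
    · simpa [hφi] using hsum
    · intro j hj hji
      rcases le_or_gt (r i) (r j) with hle | hlt
      · simp [hφ j hji hle]
      · simp [ih _ hlt j hj rfl]

namespace QP

variable {Q : FQ}

/-- The arrows of a path, the last one first. -/
@[simp]
def arrows : ∀ {i j : Q.V}, QP Q i j → List Q.E
  | _, _, .nil _ => []
  | _, _, .cons p e _ => e :: arrows p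

@[simp]
theorem arrows_castSrc {i i' j : Q.V} (h : i = i') (p : QP Q i j) :
    (castSrc h p).arrows = p.arrows := by
  subst h; rfl

@[simp]
theorem arrows_preCons (e : Q.E) : ∀ {j : Q.V} (p : QP Q (Q.t e) j),
    (preCons e p).arrows = p.arrows ++ [e]
  | _, .nil _ => by simp [preCons]
  | _, .cons p f hf => by simp [preCons, arrows_preCons e p]

@[simp]
theorem length_nil (i : Q.V) : (nil i : QP Q i i).length = 0 := by simp [length]

theorem length_eq_length_arrows : ∀ {i j : Q.V} (p : QP Q i j), p.length = p.arrows.length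
  | _, _, .nil _ => by simp
  | _, _, .cons p _ _ => by simp [length, length_eq_length_arrows p]

theorem eq_of_arrows_eq : ∀ {i j j' : Q.V} (p : QP Q i j) (p' : QP Q i j'),
    p.arrows = p'.arrows → j = j' ∧ HEq p p'
  | _, _, _, .nil _, .nil _, _ => ⟨rfl, .rfl⟩
  | _, _, _, .nil _, .cons _ _ _, h | _, _, _, .cons _ _ _, .nil _, h => by simp at h
  | _, _, _, .cons p e _, .cons p' e' _, h => by
    simp only [arrows, List.cons.injEq] at h
    obtain ⟨rfl, h⟩ := h
    obtain ⟨rfl, ⟨⟩⟩ := eq_of_arrows_eq p p' h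
    exact ⟨rfl, .rfl⟩

theorem firstArrow_eq_getLast? : ∀ {i j : Q.V} (p : QP Q i j),
    p.firstArrow = p.arrows.getLast?
  | _, _, .nil _ => by simp [firstArrow]
  | _, _, .cons p e _ => by
    rw [firstArrow, firstArrow_eq_getLast? p, arrows, List.getLast?_cons]

theorem exists_arrows_eq_append_of_firstArrow {e : Q.E} : ∀ {a b : Q.V} (q : QP Q a b),
    q.firstArrow = some e → Q.s e = a ∧ ∃ q' : QP Q (Q.t e) b, q.arrows = q'.arrows ++ [e]
  | _, _, .nil _, h => by simp [firstArrow] at h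
  | _, _, .cons (.nil _) f hf, h => by
    obtain rfl : f = e := by simpa [firstArrow] using h
    exact ⟨hf, .nil _, by simp⟩
  | _, _, .cons (.cons p g hg) f hf, h => by
    obtain ⟨hs, q', hq'⟩ :=
      exists_arrows_eq_append_of_firstArrow (.cons p g hg) (by simpa [firstArrow] using h)
    exact ⟨hs, .cons q' f hf, by simp [hq']⟩

end QP

section Associated

variable {Q : FQ} {asc : ∀ i : Q.V, (∃ e, Q.t e = i) → Q.E}

theorem asc_congr {i j : Q.V} (hij : i = j) (hi : ∃ e, Q.t e = i) (hj : ∃ e, Q.t e = j) :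
    asc i hi = asc j hj := by
  subst hij; rfl

theorem isAssoc_asc (hasc : ∀ (i : Q.V) (h : ∃ e, Q.t e = i), Q.t (asc i h) = i)
    (i : Q.V) (h : ∃ e, Q.t e = i) : IsAssoc Q asc (asc i h) :=
  asc_congr (hasc i h) _ _

theorem IsAssoc.eq_of_t_eq {a b : Q.E} (ha : IsAssoc Q asc a) (hb : IsAssoc Q asc b)
    (h : Q.t a = Q.t b) : a = b := by
  rw [← ha, ← hb]
  exact asc_congr h _ _

theorem AssocPair.of_cons {a j b : Q.V} {p : QP Q a j} {e : Q.E} {he : Q.s e = j} {q : QP Q a b}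
    (h : AssocPair Q asc (.cons p e he) q) : AssocPair Q asc p q := by
  intro c hc
  apply h c
  simp [QP.firstArrow, hc]

/-- Comparing elements of `Lam` through their keys avoids dependent equalities of paths. -/
def Lam.key {l : ℤ} (x : Lam Q asc l) : Q.V × Q.V × List Q.E × List Q.E :=
  (x.a, x.b, x.p.arrows, x.q.arrows)

theorem Lam.key_injective {l : ℤ} :
    Function.Injective (Lam.key (Q := Q) (asc := asc) (l := l)) := by
  rintro ⟨a, i, b, p, q, ok, dg⟩ ⟨a', i', b', p', q', ok', dg'⟩ h
  simp only [Lam.key, Prod.mk.injEq] at h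
  obtain ⟨rfl, rfl, hp, hq⟩ := h
  obtain ⟨rfl, ⟨⟩⟩ := QP.eq_of_arrows_eq p p' hp
  obtain ⟨-, ⟨⟩⟩ := QP.eq_of_arrows_eq q q' hq
  rfl

end Associated

section LeavittComponent

variable {k : Type} [Field k] {Q : FQ} {asc : ∀ i : Q.V, (∃ e, Q.t e = i) → Q.E} {l : ℤ}

theorem zA_congr {x x' : Lam Q asc l} (h : x = x') (e : Q.E) (he : Q.s e = x.i)
    (he' : Q.s e = x'.i) : zA (k := k) x e he = zA x' e he' := by
  subst h; rfl

variable (k) in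
def coordA (x : Lam Q asc l) (e : Q.E) : PL k Q asc l →ₗ[k] k :=
  arrowCoeff k Q e ∘ₗ (Pmod k Q x.i).subtype.restrictScalars k ∘ₗ
    (DFinsupp.lapply (R := AlgA k Q) x).restrictScalars k

theorem coordA_zA (x y : Lam Q asc l) (e f : Q.E) (hf : Q.s f = y.i) :
    coordA k x e (zA y f hf) = if y = x ∧ f = e then 1 else 0 := by
  by_cases h : y = x
  · subst h
    simp [coordA, zA, arrowCoeff_arA]
  · simp [coordA, zA, h]

theorem vtxA_smul_zE (j : Q.V) (x : Lam Q asc l) :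
    vtxA k Q j • zE (k := k) x = if j = x.i then zE x else 0 := by
  rw [zE, ← DFinsupp.single_smul]
  split_ifs with h
  · congr 1; ext1; simp [h, vtxA_mul_vtxA]
  · rw [← DFinsupp.single_zero x]; congr 1; ext1; simp [h, vtxA_mul_vtxA]

theorem arA_smul_zE (e : Q.E) (x : Lam Q asc l) :
    arA k Q e • zE (k := k) x = if h : Q.s e = x.i then zA x e h else 0 := by
  rw [zE, ← DFinsupp.single_smul]
  split_ifs with h
  · congr 1; ext1; simp [h, arA_mul_vtxA_eq_ite]
  · rw [← DFinsupp.single_zero x]; congr 1; ext1; simp [Ne.symm h, arA_mul_vtxA_eq_ite]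

variable (k asc l) in
/-- The family `B^l₀` of the paper. -/
def zAFamily : (Σ x : Lam Q asc l, {e : Q.E // Q.s e = x.i}) → PL k Q asc l :=
  fun y => zA y.1 y.2.1 y.2.2

variable (k asc l) in
def spanningSet : Set (PL k Q asc l) :=
  Set.range (zE (k := k) (asc := asc) (l := l)) ∪ Set.range (zAFamily k asc l)

theorem smul_zE_mem_span (a : AlgA k Q) (x : Lam Q asc l) :
    a • zE (k := k) x ∈ Submodule.span k (spanningSet k asc l) := by
  have ha : a ∈ Submodule.span k (gensA k Q) := by simp [span_gensA]
  induction ha using Submodule.span_induction with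
  | mem a ha =>
    rcases ha with ⟨j, rfl⟩ | ⟨e, rfl⟩
    · rw [vtxA_smul_zE]
      split_ifs
      · exact Submodule.subset_span (Or.inl ⟨x, rfl⟩)
      · exact Submodule.zero_mem _
    · rw [arA_smul_zE]
      split_ifs with h
      · exact Submodule.subset_span (Or.inr ⟨⟨x, e, h⟩, rfl⟩)
      · exact Submodule.zero_mem _
  | zero => simp
  | add a b _ _ ha hb => simpa [add_smul] using Submodule.add_mem _ ha hb
  | smul c a _ ha => simpa [smul_assoc] using Submodule.smul_mem _ c ha

theorem span_spanningSet : Submodule.span k (spanningSet k asc l) = ⊤ := by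
  refine Submodule.eq_top_iff'.mpr fun u => ?_
  induction u using DFinsupp.induction with
  | h0 => exact Submodule.zero_mem _
  | ha x m u _ _ hu =>
    refine Submodule.add_mem _ ?_ hu
    obtain ⟨a, ha⟩ := Submodule.mem_span_singleton.mp m.2
    have : DFinsupp.single x m = a • zE (k := k) x := by
      rw [zE, ← DFinsupp.single_smul]; congr 1; ext1; exact ha.symm
    rw [this]
    exact smul_zE_mem_span a x

theorem linearIndependent_zAFamily : LinearIndependent k (zAFamily k asc l) := by
  refine linearIndependent_of_triangular _ (fun _ => 0) fun y => ⟨coordA k y.1 y.2.1, ?_, ?_⟩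
  · simp [zAFamily, coordA_zA]
  · rintro ⟨x', e', he'⟩ hne -
    rw [zAFamily, coordA_zA, if_neg]
    rintro ⟨rfl, rfl⟩
    exact hne rfl

end LeavittComponent

namespace IsLeavittDiff

variable {k : Type} [Field k] {Q : FQ} {asc : ∀ i : Q.V, (∃ e, Q.t e = i) → Q.E}
  {δ : ∀ l : ℤ, PL k Q asc l →ₗ[AlgA k Q] PL k Q asc (l + 1)}

theorem delta_zE_cons (hδ : IsLeavittDiff k Q asc δ) {l : ℤ} {a j b : Q.V} (p : QP Q a j)
    (e : Q.E) (he : Q.s e = j) (q : QP Q a b) (ok : AssocPair Q asc (.cons p e he) q)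
    (dg : (q.length : ℤ) - ((QP.cons p e he).length : ℤ) = l) :
    δ l (zE ⟨a, Q.t e, b, .cons p e he, q, ok, dg⟩) =
      zA ⟨a, j, b, p, q, ok.of_cons, by simp only [QP.length] at dg; push_cast at dg; omega⟩
        e he :=
  hδ.2.1 l a j b p e he q ok dg _ _

theorem zA_mem_range_of_assocPair (hδ : IsLeavittDiff k Q asc δ) {l : ℤ} {a j b : Q.V}
    (p : QP Q a j) (q : QP Q a b) (ok : AssocPair Q asc p q)
    (dg : (q.length : ℤ) - (p.length : ℤ) = l + 1) (e : Q.E) (he : Q.s e = j)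
    (h : AssocPair Q asc (.cons p e he) q) :
    zA (⟨a, j, b, p, q, ok, dg⟩ : Lam Q asc (l + 1)) e he ∈ LinearMap.range (δ l) :=
  ⟨zE ⟨a, Q.t e, b, .cons p e he, q, h, by simp only [QP.length]; push_cast; omega⟩,
    hδ.delta_zE_cons p e he q h _⟩

theorem zA_mem_range (hδ : IsLeavittDiff k Q asc δ) {l : ℤ} (z : Lam Q asc (l + 1)) (e : Q.E)
    (he : Q.s e = z.i) : zA z e he ∈ LinearMap.range (δ l) := by
  obtain ⟨a, j, b, p, q, ok, dg⟩ := z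
  by_cases hpq : AssocPair Q asc (.cons p e he) q
  · exact hδ.zA_mem_range_of_assocPair p q ok dg e he hpq
  obtain ⟨d, hpd, hqd, hd⟩ : ∃ d, (QP.cons p e he).firstArrow = some d ∧
      q.firstArrow = some d ∧ IsAssoc Q asc d := by
    simpa [AssocPair] using hpq
  cases p with
  | cons p f hf => exact absurd hd (ok d (by simpa [QP.firstArrow] using hpd) hqd)
  | nil =>
    obtain rfl : e = d := by simpa [QP.firstArrow] using hpd
    obtain ⟨-, q', hq'⟩ := QP.exists_arrows_eq_append_of_firstArrow q hqd
    have dg' : (q'.length : ℤ) - ((QP.nil (Q.t e)).length : ℤ) = l := by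
      simp [QP.length_eq_length_arrows, hq'] at dg ⊢
      omega
    have h := LinearMap.mem_range_self (δ l)
      (zE ⟨_, _, b, .nil _, q', assocPair_nil_left _, dg'⟩)
    rw [hδ.2.2, ← Finset.add_sum_erase _ _ (Finset.mem_univ ⟨e, rfl⟩),
      Submodule.add_mem_iff_left _ (Submodule.sum_mem _ fun β hβ => ?_)] at h
    · convert h using 1
      exact zA_congr (Lam.key_injective (by simp [Lam.key, hq']; exact he.symm)) _ _ _
    refine hδ.zA_mem_range_of_assocPair _ _ _ _ _ rfl fun c hc _ hcA => ?_
    obtain rfl : β.1 = c := by simpa [QP.firstArrow] using hc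
    exact Finset.ne_of_mem_erase hβ (Subtype.ext (hcA.eq_of_t_eq hd β.2))

theorem exists_coord_delta_zE_nil (hδ : IsLeavittDiff k Q asc δ) (hQ : Q.NoSources)
    (hasc : ∀ (i : Q.V) (h : ∃ e, Q.t e = i), Q.t (asc i h) = i) {l : ℤ} {a b : Q.V}
    (q : QP Q a b) (ok : AssocPair Q asc (.nil a) q)
    (dg : (q.length : ℤ) - ((QP.nil a).length : ℤ) = l) :
    ∃ φ : PL k Q asc (l + 1) →ₗ[k] k, φ (δ l (zE ⟨a, a, b, .nil a, q, ok, dg⟩)) = 1 ∧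
      ∀ y, y ≠ ⟨a, a, b, .nil a, q, ok, dg⟩ → φ (δ l (zE y)) = 0 := by
  set α := asc a (hQ a)
  have hα : Q.t α = a := hasc a (hQ a)
  have hαA : IsAssoc Q asc α := isAssoc_asc hasc a (hQ a)
  refine ⟨coordA k ⟨Q.s α, Q.s α, b, .nil _, .preCons α (.castSrc hα.symm q),
    assocPair_nil_left _, by simp [QP.length_preCons, QP.length_castSrc] at dg ⊢; omega⟩ α,
    ?_, ?_⟩
  · rw [hδ.2.2, map_sum, Finset.sum_eq_single_of_mem ⟨α, hα⟩ (Finset.mem_univ _)]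
    · simp [coordA_zA]
    · intro β _ hβ
      rw [coordA_zA, if_neg]
      rintro ⟨-, h⟩
      exact hβ (Subtype.ext h)
  rintro ⟨a', i', b', p', q', ok', dg'⟩ hne
  cases p' with
  | nil =>
    rw [hδ.2.2, map_sum]
    refine Finset.sum_eq_zero fun β _ => ?_
    rw [coordA_zA, if_neg]
    rintro ⟨hT, hβ⟩
    obtain ⟨hb, hq⟩ : b' = b ∧ q'.arrows = q.arrows := by
      simpa [Lam.key, hβ] using congrArg Lam.key hT
    refine hne (Lam.key_injective ?_)
    simp only [Lam.key, QP.arrows, hb, hq, Prod.mk.injEq, and_true]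
    rw [← hα, ← hβ, β.2]
  | cons p' f hf =>
    rw [hδ.delta_zE_cons, coordA_zA, if_neg]
    rintro ⟨hT, rfl⟩
    obtain ⟨-, -, hp', hq'⟩ :
        a' = Q.s α ∧ b' = b ∧ p'.arrows = [] ∧ q'.arrows = q.arrows ++ [α] := by
      simpa [Lam.key] using congrArg Lam.key hT
    exact ok' α (by simp [QP.firstArrow_eq_getLast?, hp'])
      (by simp [QP.firstArrow_eq_getLast?, hq']) hαA

theorem exists_coord_delta_zE_cons (hδ : IsLeavittDiff k Q asc δ) {l : ℤ} {a j b : Q.V}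
    (p : QP Q a j) (e : Q.E) (he : Q.s e = j) (q : QP Q a b)
    (ok : AssocPair Q asc (.cons p e he) q)
    (dg : (q.length : ℤ) - ((QP.cons p e he).length : ℤ) = l) :
    ∃ φ : PL k Q asc (l + 1) →ₗ[k] k,
      φ (δ l (zE ⟨a, Q.t e, b, .cons p e he, q, ok, dg⟩)) = 1 ∧
      ∀ y, y ≠ ⟨a, Q.t e, b, .cons p e he, q, ok, dg⟩ → 0 < y.p.length →
        φ (δ l (zE y)) = 0 := by
  refine ⟨coordA k ⟨a, j, b, p, q, ok.of_cons, by simp [QP.length] at dg; omega⟩ e, ?_, ?_⟩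
  · rw [hδ.delta_zE_cons, coordA_zA, if_pos ⟨rfl, rfl⟩]
  rintro ⟨a', i', b', p', q', ok', dg'⟩ hne hlen
  cases p' with
  | nil => simp at hlen
  | cons p' f hf =>
    rw [hδ.delta_zE_cons, coordA_zA, if_neg]
    rintro ⟨hT, rfl⟩
    cases hT
    exact hne rfl

theorem linearIndependent_delta_zE (hδ : IsLeavittDiff k Q asc δ) (hQ : Q.NoSources)
    (hasc : ∀ (i : Q.V) (h : ∃ e, Q.t e = i), Q.t (asc i h) = i) (l : ℤ) :
    LinearIndependent k (fun x : Lam Q asc l => δ l (zE x)) := by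
  refine linearIndependent_of_triangular _ (fun x => x.p.length) fun x => ?_
  obtain ⟨a, i, b, p, q, ok, dg⟩ := x
  cases p with
  | nil =>
    obtain ⟨φ, h1, h0⟩ := hδ.exists_coord_delta_zE_nil hQ hasc q ok dg
    exact ⟨φ, h1, fun y hy _ => h0 y hy⟩
  | cons p e he =>
    obtain ⟨φ, h1, h0⟩ := hδ.exists_coord_delta_zE_cons p e he q ok dg
    refine ⟨φ, h1, fun y hy hle => h0 y hy (lt_of_lt_of_le ?_ hle)⟩
    simp [QP.length]

theorem span_zAFamily_le_ker (hδ : IsLeavittDiff k Q asc δ) (l : ℤ) :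
    Submodule.span k (Set.range (zAFamily k asc l)) ≤ (LinearMap.ker (δ l)).restrictScalars k :=
  Submodule.span_le.mpr <| Set.range_subset_iff.mpr fun y => hδ.1 l y.1 y.2.1 y.2.2

theorem ker_le_span_zAFamily (hδ : IsLeavittDiff k Q asc δ) (hQ : Q.NoSources)
    (hasc : ∀ (i : Q.V) (h : ∃ e, Q.t e = i), Q.t (asc i h) = i) (l : ℤ) :
    (LinearMap.ker (δ l)).restrictScalars k ≤
      Submodule.span k (Set.range (zAFamily k asc l)) := by
  intro u hu
  have hu' : u ∈ Submodule.span k (Set.range zE) ⊔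
      Submodule.span k (Set.range (zAFamily k asc l)) := by
    rw [← Submodule.span_union]
    exact (span_spanningSet (k := k)).symm ▸ Submodule.mem_top
  obtain ⟨v, hv, w, hw, rfl⟩ := Submodule.mem_sup.mp hu'
  rw [← Finsupp.range_linearCombination] at hv
  obtain ⟨c, rfl⟩ := hv
  have hδv : δ l (Finsupp.linearCombination k zE c) = 0 := by
    have hw0 : δ l w = 0 := hδ.span_zAFamily_le_ker l hw
    simpa [hw0] using hu
  have hc : c = 0 := by
    refine linearIndependent_iff.mp (hδ.linearIndependent_delta_zE hQ hasc l) c ?_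
    rwa [← LinearMap.coe_restrictScalars k (δ l),
      Finsupp.apply_linearCombination k ((δ l).restrictScalars k)] at hδv
  simpa [hc] using hw

theorem span_zAFamily_le_range (hδ : IsLeavittDiff k Q asc δ) (l : ℤ) :
    Submodule.span k (Set.range (zAFamily k asc (l + 1))) ≤
      (LinearMap.range (δ l)).restrictScalars k :=
  Submodule.span_le.mpr <| Set.range_subset_iff.mpr fun y => hδ.zA_mem_range y.1 y.2.1 y.2.2

theorem delta_zE_mem_span (hδ : IsLeavittDiff k Q asc δ) {l : ℤ} (x : Lam Q asc l) :
    δ l (zE x) ∈ Submodule.span k (Set.range (zAFamily k asc (l + 1))) := by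
  obtain ⟨a, i, b, p, q, ok, dg⟩ := x
  cases p with
  | nil =>
    rw [hδ.2.2]
    exact Submodule.sum_mem _ fun β _ => Submodule.subset_span ⟨⟨_, β.1, rfl⟩, rfl⟩
  | cons p e he =>
    rw [hδ.delta_zE_cons]
    exact Submodule.subset_span ⟨⟨_, e, he⟩, rfl⟩

theorem range_le_span_zAFamily (hδ : IsLeavittDiff k Q asc δ) (l : ℤ) :
    (LinearMap.range (δ l)).restrictScalars k ≤
      Submodule.span k (Set.range (zAFamily k asc (l + 1))) := by
  rintro _ ⟨u, rfl⟩
  have hu : u ∈ Submodule.span k (spanningSet k asc l) := by simp [span_spanningSet]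
  have := Submodule.mem_map_of_mem (f := (δ l).restrictScalars k) hu
  rw [Submodule.map_span] at this
  refine Submodule.span_le.mpr ?_ this
  rintro _ ⟨v, hv | ⟨y, rfl⟩, rfl⟩
  · obtain ⟨x, rfl⟩ := hv
    exact hδ.delta_zE_mem_span x
  · simp [zAFamily, hδ.1]

end IsLeavittDiff

/-- **Kernels and images of the differential (Lemma 2.6).**  Let `Q` be a finite quiver
without sources and `δ` the differential of the projective Leavitt complex.  For each
`l ∈ ℤ`, the set `B^l₀ = {α ζ_{(p,q)} | (p,q) ∈ Λ^l_i, α ∈ Q₁, s(α) = i}` is a `k`-basis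
of `Ker δ^l`, and `B^{l+1}₀` is a `k`-basis of `Im δ^l`. -/
theorem ker_im_of_leavitt_differential (k : Type) [Field k]
    (Q : FQ) (hQ : Q.NoSources)
    (asc : ∀ i : Q.V, (∃ e, Q.t e = i) → Q.E)
    (hasc : ∀ (i : Q.V) (h : ∃ e, Q.t e = i), Q.t (asc i h) = i)
    (δ : ∀ l : ℤ, PL k Q asc l →ₗ[AlgA k Q] PL k Q asc (l + 1))
    (hδ : IsLeavittDiff k Q asc δ) (l : ℤ) :
    (LinearIndependent k
      (fun y : Σ x : Lam Q asc l, {e : Q.E // Q.s e = x.i} => zA (k := k) y.1 y.2.1 y.2.2)) ∧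
    Submodule.span k
        (Set.range (fun y : Σ x : Lam Q asc l, {e : Q.E // Q.s e = x.i} =>
          zA (k := k) y.1 y.2.1 y.2.2)) =
      (LinearMap.ker (δ l)).restrictScalars k ∧
    Submodule.span k
        (Set.range (fun y : Σ x : Lam Q asc (l + 1), {e : Q.E // Q.s e = x.i} =>
          zA (k := k) y.1 y.2.1 y.2.2)) =
      (LinearMap.range (δ l)).restrictScalars k :=
  ⟨linearIndependent_zAFamily,
    le_antisymm (hδ.span_zAFamily_le_ker l) (hδ.ker_le_span_zAFamily hQ hasc l),
    le_antisymm (hδ.span_zAFamily_le_range l) (hδ.range_le_span_zAFamily l)⟩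
end
end

section
/- Let Q be a finite quiver without sources. The semisimple left A-module kQ₀ = A/rad A has an injective resolution M• with M^l = ⊕_{i ∈ Q₀} I_i^{(Λ^{l,0}_i)} for l ≥ 0 and M^l = 0 for l < 0, where the differential satisfies d^l(e_i^♯ ζ_{(e_i,q)}) = 0 and d^l(α^♯ ζ_{(e_i,q)}) = e_{s(α)}^♯ ζ_{(e_{s(α)}, qα)}. In particular, H⁰(M•) ≅ kQ₀ and H^l(M•) = 0 for l ≠ 0. -/
noncomputable section

/-- The index set `Λ^{l,0}_i` (ranging over `i`): associated pairs `(e_i, q)` with a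
trivial first component, `s(q) = i` and `l(q) = l`. -/
structure Lam0 (Q : FQ) (l : ℕ) where
  i : Q.V
  b : Q.V
  q : QP Q i b
  len : q.length = l

/-- The underlying vector space of `M^l = ⊕_{i ∈ Q₀} I_i^{(Λ^{l,0}_i)}`, where the
injective `A`-module `I_i = D(e_i A)` has the `k`-basis
`{e_i^♯} ∪ {α^♯ | α ∈ Q₁, t(α) = i}`. -/
abbrev Mspace (k : Type) [Field k] (Q : FQ) (l : ℕ) : Type :=
  (Σ x : Lam0 Q l, Option {e : Q.E // Q.t e = x.i}) →₀ k

/-- The basis vector `e_i^♯ ζ_{(e_i, q)}` of `M^l`. -/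
def mE {k : Type} [Field k] {Q : FQ} {l : ℕ} (x : Lam0 Q l) : Mspace k Q l :=
  Finsupp.single ⟨x, none⟩ 1

/-- The basis vector `α^♯ ζ_{(e_i, q)}` of `M^l` for `t(α) = i`. -/
def mA {k : Type} [Field k] {Q : FQ} {l : ℕ} (x : Lam0 Q l) (e : Q.E)
    (he : Q.t e = x.i) : Mspace k Q l :=
  Finsupp.single ⟨x, some ⟨e, he⟩⟩ 1

/-!
Each `M^l` is a retract of the coinduced module `Hom_k(A, k)^{Λ^{l,0}}`, on which `A` acts by
`(a • f)_x(b) = f_x(b a)`. That module is injective by Baer's criterion: a map `g` from a left ideal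
`I` extends to `a ↦ a • ψ`, where `ψ_x` is any `k`-linear extension of `y ↦ g(y)_x(1)` to `A`.
The embedding sends `m` to `x ↦ (a ↦ e^♯ζ_x-coordinate of a • m)`, its left inverse sends `f` to
the vector whose `u^♯ζ_x`-coordinate is `f_x(u)`; both are `A`-linear, the latter because it is
so on the generators `e_j` and `α`.

The differential kills the `e^♯ζ` and maps the `α^♯ζ_{(e_i, q)}` bijectively onto the `e^♯ζ` of
the next degree, since a path of positive length factors uniquely as `qα`. So the kernel and the
image of every `d^l` are the span of the socle vectors `e^♯ζ`; in degree `0` these are the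
`e_i^♯ζ_{(e_i, e_i)}`, a copy of `kQ₀`.
-/

section Coinduced

variable (k A X : Type*) [Field k] [Ring A] [Algebra k A]

def coindRep : A →ₐ[k] Module.End k (X → A →ₗ[k] k) where
  toFun a := LinearMap.compLeft (LinearMap.lcomp k k (LinearMap.mulRight k a)) X
  map_one' := by ext; simp
  map_mul' a b := by ext; simp [mul_assoc]
  map_zero' := by ext; simp
  map_add' a b := by ext; simp [mul_add]
  commutes' c := by ext; simp [Algebra.algebraMap_eq_smul_one]

variable {k A X}

@[simp]
lemma coindRep_apply (a : A) (f : X → A →ₗ[k] k) (x : X) (b : A) :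
    coindRep k A X a f x b = f x (b * a) := rfl

variable {V : Type*} [AddCommGroup V] [Module k V]

theorem injective_of_retract_coind (ρ : A →ₐ[k] Module.End k V)
    (ι : V →ₗ[k] X → A →ₗ[k] k) (π : (X → A →ₗ[k] k) → V)
    (hπι : ∀ v, π (ι v) = v) (hι : ∀ a v x b, ι (ρ a v) x b = ι v x (b * a))
    (hπ : ∀ a f, π (coindRep k A X a f) = ρ a (π f)) :
    letI := Module.compHom V ρ.toRingHom
    Module.Injective A V := by
  let _ := Module.compHom V ρ.toRingHom
  refine Module.Baer.injective fun I g => ?_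
  let gk : I.restrictScalars k →ₗ[k] V :=
    { toFun y := g ⟨y, y.2⟩
      map_add' y z := map_add g ⟨y, y.2⟩ ⟨z, z.2⟩
      map_smul' c y := by
        rw [← algebraMap_smul A c y]
        exact (map_smul g _ ⟨y, y.2⟩).trans (LinearMap.congr_fun (ρ.commutes c) _) }
  choose ψ hψ using fun x =>
    LinearMap.exists_extend (LinearMap.applyₗ 1 ∘ₗ LinearMap.proj x ∘ₗ ι ∘ₗ gk)
  refine ⟨LinearMap.toSpanSingleton A V (π ψ), fun y hy => ?_⟩
  have hcoind : coindRep k A X y ψ = ι (g ⟨y, hy⟩) := by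
    ext x b
    have h := LinearMap.congr_fun (hψ x) ⟨b * y, I.mul_mem_left b hy⟩
    simp only [LinearMap.comp_apply, Submodule.subtype_apply] at h
    rw [coindRep_apply, h]
    show ι (g (b • ⟨y, hy⟩)) x 1 = _
    rw [map_smul]
    exact (hι b _ x 1).trans (by rw [one_mul])
  show ρ y (π ψ) = g ⟨y, hy⟩
  rw [← hπ, hcoind, hπι]

end Coinduced

namespace AlgA

variable (k : Type) [Field k] (Q : FQ)

lemma vtxA_mul_vtxA (i j : Q.V) :
    vtxA k Q i * vtxA k Q j = if i = j then vtxA k Q i else 0 := by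
  simpa [vtxA, apply_ite] using RingQuot.mkAlgHom_rel k (ARel.vtx_mul (k := k) (Q := Q) i j)

lemma vtxA_mul_arA_self (e : Q.E) : vtxA k Q (Q.t e) * arA k Q e = arA k Q e := by
  simpa [vtxA, arA] using RingQuot.mkAlgHom_rel k (ARel.vtx_ar (k := k) (Q := Q) e)

lemma vtxA_mul_arA (j : Q.V) (e : Q.E) :
    vtxA k Q j * arA k Q e = if Q.t e = j then arA k Q e else 0 := by
  rw [← vtxA_mul_arA_self, ← mul_assoc, vtxA_mul_vtxA]
  split_ifs <;> simp_all

lemma arA_mul_vtxA (e : Q.E) (j : Q.V) :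
    arA k Q e * vtxA k Q j = if Q.s e = j then arA k Q e else 0 := by
  rw [← _root_.arA_mul_vtxA k Q e, mul_assoc, vtxA_mul_vtxA]
  split_ifs <;> simp

lemma arA_mul_arA (e f : Q.E) : arA k Q e * arA k Q f = 0 := by
  simpa [arA] using RingQuot.mkAlgHom_rel k (ARel.rad_sq (k := k) (Q := Q) e f)

variable {k Q}

theorem intertwining_of_generators {V W : Type*} [AddCommGroup V] [Module k V]
    [AddCommGroup W] [Module k W] (ρ : AlgA k Q →ₐ[k] Module.End k V)
    (τ : AlgA k Q →ₐ[k] Module.End k W) (φ : V →ₗ[k] W)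
    (hvtx : ∀ i, φ ∘ₗ ρ (vtxA k Q i) = τ (vtxA k Q i) ∘ₗ φ)
    (harr : ∀ e, φ ∘ₗ ρ (arA k Q e) = τ (arA k Q e) ∘ₗ φ) (a : AlgA k Q) :
    φ ∘ₗ ρ a = τ a ∘ₗ φ := by
  obtain ⟨a, rfl⟩ := RingQuot.mkAlgHom_surjective k (ARel k Q) a
  induction a using FreeAlgebra.induction with
  | grade0 c => ext v; simp
  | grade1 g => cases g with
    | vtx i => exact hvtx i
    | ar e => exact harr e
  | mul a b ha hb =>
    simp only [map_mul, Module.End.mul_eq_comp]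
    rw [← LinearMap.comp_assoc, ha, LinearMap.comp_assoc, hb, LinearMap.comp_assoc]
  | add a b ha hb => simp only [map_add, LinearMap.comp_add, LinearMap.add_comp, ha, hb]

end AlgA

namespace QP

variable {Q : FQ}

def toList : ∀ {i j : Q.V}, QP Q i j → List Q.E
  | _, _, .nil _ => []
  | _, _, .cons p e _ => e :: toList p

lemma length_toList : ∀ {i j : Q.V} (p : QP Q i j), p.toList.length = p.length
  | _, _, .nil _ => by simp [toList, length]
  | _, _, .cons p _ _ => by simp [toList, length, length_toList p]

lemma toList_castSrc {i i' j : Q.V} (h : i = i') (p : QP Q i j) :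
    (castSrc h p).toList = p.toList := by subst h; rfl

lemma toList_preCons (e : Q.E) : ∀ {j : Q.V} (p : QP Q (Q.t e) j),
    (preCons e p).toList = p.toList ++ [e]
  | _, .nil _ => by simp [preCons, toList]
  | _, .cons p f _ => by simp [preCons, toList, toList_preCons e p]

lemma eq_of_toList_eq : ∀ {i j j' : Q.V} (p : QP Q i j) (q : QP Q i j'),
    p.toList = q.toList → j = j' ∧ HEq p q
  | _, _, _, .nil _, .nil _, _ => ⟨rfl, .rfl⟩
  | _, _, _, .nil _, .cons _ _ _, h | _, _, _, .cons _ _ _, .nil _, h => by simp [toList] at h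
  | _, _, _, .cons p e he, .cons q f hf, h => by
      simp only [toList, List.cons.injEq] at h
      obtain ⟨rfl, h⟩ := h
      obtain ⟨rfl, h⟩ := eq_of_toList_eq p q h
      cases h
      exact ⟨rfl, .rfl⟩

lemma exists_eq_castSrc_preCons : ∀ {i j : Q.V} (p : QP Q i j), p.length ≠ 0 →
    ∃ (e : Q.E) (h : Q.s e = i) (q : QP Q (Q.t e) j), p = castSrc h (preCons e q)
  | _, _, .nil _, h => absurd (by simp [length]) h
  | _, _, .cons (.nil _) f hf, _ => ⟨f, hf, .nil _, by subst hf; rfl⟩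
  | _, _, .cons (.cons p g hg) f hf, _ => by
      obtain ⟨e, rfl, q, hq⟩ := exists_eq_castSrc_preCons (.cons p g hg) (by simp [length])
      exact ⟨e, rfl, .cons q f hf, by rw [hq]; rfl⟩

end QP

namespace Lam0

variable {Q : FQ} {l : ℕ}

def nil (i : Q.V) : Lam0 Q 0 := ⟨i, i, .nil i, by simp [QP.length]⟩

@[simp]
lemma nil_i (i : Q.V) : (nil i : Lam0 Q 0).i = i := rfl

def preCons (x : Lam0 Q l) (e : Q.E) (he : Q.t e = x.i) : Lam0 Q (l + 1) :=
  ⟨Q.s e, x.b, QP.preCons e (QP.castSrc he.symm x.q),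
    by simp [QP.length_preCons, QP.length_castSrc, x.len]⟩

lemma ext_toList {x y : Lam0 Q l} (hi : x.i = y.i) (hq : x.q.toList = y.q.toList) : x = y := by
  obtain ⟨i, b, p, hp⟩ := x
  obtain ⟨i', b', q, hq'⟩ := y
  cases hi
  obtain ⟨rfl, h⟩ := QP.eq_of_toList_eq p q hq
  cases h
  rfl

instance : Finite (Lam0 Q l) :=
  Finite.of_injective (β := Q.V × List.Vector Q.E l)
    (fun x => (x.i, ⟨x.q.toList, by rw [QP.length_toList, x.len]⟩))
    fun _ _ h => ext_toList (congrArg Prod.fst h) (congrArg Subtype.val (congrArg Prod.snd h))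

lemma eq_nil (x : Lam0 Q 0) : x = nil x.i :=
  ext_toList rfl ((List.eq_nil_of_length_eq_zero ((QP.length_toList _).trans x.len)).trans
    (by simp [nil, QP.toList]))

lemma nil_surjective : Function.Surjective (nil (Q := Q)) :=
  fun x => ⟨x.i, (eq_nil x).symm⟩

lemma toList_preCons (x : Lam0 Q l) (e : Q.E) (he : Q.t e = x.i) :
    (x.preCons e he).q.toList = x.q.toList ++ [e] := by
  simp [preCons, QP.toList_preCons, QP.toList_castSrc]

lemma preCons_inj {x x' : Lam0 Q l} {e e' : Q.E} {he : Q.t e = x.i} {he' : Q.t e' = x'.i} :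
    x.preCons e he = x'.preCons e' he' ↔ x = x' ∧ e = e' := by
  refine ⟨fun h => ?_, by rintro ⟨rfl, rfl⟩; rfl⟩
  have hq := congrArg (fun y => y.q.toList) h
  simp only [toList_preCons] at hq
  obtain ⟨hq', he_eq⟩ := List.append_inj hq (by simp [QP.length_toList, x.len, x'.len])
  obtain rfl : e = e' := List.singleton_inj.mp he_eq
  exact ⟨ext_toList (he.symm.trans he') hq', rfl⟩

lemma exists_eq_preCons (y : Lam0 Q (l + 1)) : ∃ x e he, y = preCons x e he := by
  obtain ⟨e, h, q, hq⟩ := QP.exists_eq_castSrc_preCons y.q (by simp [y.len])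
  have hlen : q.length = l := by
    have := y.len
    rwa [hq, QP.length_castSrc, QP.length_preCons, Nat.add_right_cancel_iff] at this
  refine ⟨⟨Q.t e, y.b, q, hlen⟩, e, rfl, ext_toList h.symm ?_⟩
  rw [toList_preCons, hq, QP.toList_castSrc, QP.toList_preCons]

end Lam0

namespace Mspace

variable {k : Type} [Field k] {Q : FQ} {l : ℕ}

abbrev Idx (Q : FQ) (l : ℕ) := Σ x : Lam0 Q l, Option {e : Q.E // Q.t e = x.i}

def Idx.vertex : Idx Q l → Q.V
  | ⟨x, none⟩ => x.i
  | ⟨_, some e⟩ => Q.s e.1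

variable (k) in
/-- The basis vector of `M^l` at `idx` is `u^♯ ζ_{idx.1}` for `u = Idx.dualOf k idx`. -/
def Idx.dualOf : Idx Q l → AlgA k Q
  | ⟨x, none⟩ => vtxA k Q x.i
  | ⟨_, some e⟩ => arA k Q e.1

lemma Idx.dualOf_mul_vtxA (idx : Idx Q l) (j : Q.V) :
    idx.dualOf k * vtxA k Q j = if idx.vertex = j then idx.dualOf k else 0 := by
  rcases idx with ⟨x, _ | ⟨e, he⟩⟩
  · exact AlgA.vtxA_mul_vtxA k Q x.i j
  · exact AlgA.arA_mul_vtxA k Q e j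

lemma hom_ext {W : Type*} [AddCommGroup W] [Module k W] {f g : Mspace k Q l →ₗ[k] W}
    (hE : ∀ x, f (mE x) = g (mE x)) (hA : ∀ x e he, f (mA x e he) = g (mA x e he)) :
    f = g :=
  Finsupp.basisSingleOne.ext fun
    | ⟨x, none⟩ => hE x
    | ⟨x, some ⟨e, he⟩⟩ => hA x e he

open Classical in
@[simp]
lemma mE_apply_none (x y : Lam0 Q l) :
    (mE x : Mspace k Q l) ⟨y, none⟩ = if y = x then 1 else 0 := by
  by_cases h : y = x
  · subst h; simp [mE]
  · simp [mE, h]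

@[simp]
lemma mE_apply_some (x y : Lam0 Q l) (s : {e : Q.E // Q.t e = y.i}) :
    (mE x : Mspace k Q l) ⟨y, some s⟩ = 0 :=
  Finsupp.single_eq_of_ne (by rintro ⟨⟩)

@[simp]
lemma mA_apply_none (x : Lam0 Q l) (e : Q.E) (he : Q.t e = x.i) (y : Lam0 Q l) :
    (mA x e he : Mspace k Q l) ⟨y, none⟩ = 0 :=
  Finsupp.single_eq_of_ne (by rintro ⟨⟩)

open Classical in
@[simp]
lemma mA_apply_some (x : Lam0 Q l) (e : Q.E) (he : Q.t e = x.i) (y : Lam0 Q l) (f : Q.E)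
    (hf : Q.t f = y.i) : (mA x e he : Mspace k Q l) ⟨y, some ⟨f, hf⟩⟩ =
      if y = x ∧ f = e then 1 else 0 := by
  by_cases h : y = x ∧ f = e
  · obtain ⟨rfl, rfl⟩ := h; simp [mA]
  · rw [if_neg h, mA, Finsupp.single_eq_of_ne]
    rintro ⟨⟩
    exact h ⟨rfl, rfl⟩

variable (k Q l) in
def socle : Submodule k (Mspace k Q l) := Finsupp.supported k k {idx | idx.2 = none}

lemma socle_eq_span : socle k Q l = Submodule.span k (Set.range mE) := by
  rw [socle, Finsupp.supported_eq_span_single]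
  congr 1
  ext m
  constructor
  · rintro ⟨⟨x, o⟩, ho, rfl⟩
    obtain rfl : o = none := ho
    exact ⟨x, rfl⟩
  · rintro ⟨x, rfl⟩
    exact ⟨⟨x, none⟩, rfl, rfl⟩

variable (σ : AlgA k Q →ₐ[k] Module.End k (Mspace k Q l)) in
def toCoind : Mspace k Q l →ₗ[k] Lam0 Q l → AlgA k Q →ₗ[k] k :=
  LinearMap.pi fun x =>
    ((σ.toLinearMap : AlgA k Q →ₗ[k] Module.End k (Mspace k Q l)).compr₂
      (Finsupp.lapply ⟨x, none⟩)).flip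

@[simp]
lemma toCoind_apply (σ : AlgA k Q →ₐ[k] Module.End k (Mspace k Q l)) (m : Mspace k Q l)
    (x : Lam0 Q l) (a : AlgA k Q) : toCoind σ m x a = σ a m ⟨x, none⟩ := rfl

variable (k) in
def ofCoind : (Lam0 Q l → AlgA k Q →ₗ[k] k) →ₗ[k] Mspace k Q l :=
  (Finsupp.linearEquivFunOnFinite k k (Idx Q l)).symm.toLinearMap ∘ₗ
    LinearMap.pi fun idx => LinearMap.applyₗ (idx.dualOf k) ∘ₗ LinearMap.proj idx.1

@[simp]
lemma ofCoind_apply (f : Lam0 Q l → AlgA k Q →ₗ[k] k) (idx : Idx Q l) :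
    ofCoind k f idx = f idx.1 (idx.dualOf k) := rfl

/-- The `A`-module structure of `⊕_i I_i^{(Λ^{l,0}_i)}` on `M^l`. -/
structure IsStdAction (σ : AlgA k Q →ₐ[k] Module.End k (Mspace k Q l)) : Prop where
  vtxA_mE : ∀ j x, σ (vtxA k Q j) (mE x) = if x.i = j then mE x else 0
  vtxA_mA : ∀ j x e he, σ (vtxA k Q j) (mA x e he) = if Q.s e = j then mA x e he else 0
  arA_mE : ∀ b x, σ (arA k Q b) (mE x) = 0
  arA_mA : ∀ b x e he, σ (arA k Q b) (mA x e he) = if b = e then mE x else 0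

namespace IsStdAction

variable {σ : AlgA k Q →ₐ[k] Module.End k (Mspace k Q l)} (hσ : IsStdAction σ)
include hσ

lemma vtxA_apply (j : Q.V) (m : Mspace k Q l) (idx : Idx Q l) :
    σ (vtxA k Q j) m idx = if idx.vertex = j then m idx else 0 := by
  have key : Finsupp.lapply idx ∘ₗ σ (vtxA k Q j) =
      if idx.vertex = j then Finsupp.lapply idx else 0 := by
    refine hom_ext (fun x => ?_) (fun x e he => ?_) <;> split_ifs <;>
      simp only [LinearMap.comp_apply, Finsupp.lapply_apply, LinearMap.zero_apply,
        hσ.vtxA_mE, hσ.vtxA_mA]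
    all_goals rcases idx with ⟨y, _ | ⟨f, hf⟩⟩ <;> split_ifs <;> aesop (add simp Idx.vertex)
  have := LinearMap.congr_fun key m
  split_ifs at this ⊢ <;> exact this

lemma arA_apply_none (b : Q.E) (m : Mspace k Q l) (x : Lam0 Q l) :
    σ (arA k Q b) m ⟨x, none⟩ = if h : Q.t b = x.i then m ⟨x, some ⟨b, h⟩⟩ else 0 := by
  have key : Finsupp.lapply ⟨x, none⟩ ∘ₗ σ (arA k Q b) =
      if h : Q.t b = x.i then Finsupp.lapply ⟨x, some ⟨b, h⟩⟩ else 0 := by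
    refine hom_ext (fun y => ?_) (fun y e he => ?_) <;> split_ifs <;>
      simp only [LinearMap.comp_apply, Finsupp.lapply_apply, LinearMap.zero_apply,
        hσ.arA_mE, hσ.arA_mA]
    all_goals (try split_ifs) <;> aesop
  have := LinearMap.congr_fun key m
  split_ifs at this ⊢ <;> exact this

lemma arA_apply_some (b : Q.E) (m : Mspace k Q l) (x : Lam0 Q l)
    (s : {e : Q.E // Q.t e = x.i}) : σ (arA k Q b) m ⟨x, some s⟩ = 0 := by
  have key : Finsupp.lapply ⟨x, some s⟩ ∘ₗ σ (arA k Q b) = 0 := by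
    refine hom_ext (fun y => ?_) (fun y e he => ?_) <;>
      simp only [LinearMap.comp_apply, Finsupp.lapply_apply, LinearMap.zero_apply,
        hσ.arA_mE, hσ.arA_mA]
    all_goals (try split_ifs) <;> simp_all
  exact LinearMap.congr_fun key m

lemma dualOf_apply (m : Mspace k Q l) (idx : Idx Q l) :
    σ (idx.dualOf k) m ⟨idx.1, none⟩ = m idx := by
  rcases idx with ⟨x, _ | ⟨e, he⟩⟩
  · simp [Idx.dualOf, hσ.vtxA_apply, Idx.vertex]
  · simp [Idx.dualOf, hσ.arA_apply_none, he]

lemma ofCoind_comp_coindRep (a : AlgA k Q) :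
    ofCoind k ∘ₗ coindRep k (AlgA k Q) (Lam0 Q l) a = σ a ∘ₗ ofCoind k := by
  refine AlgA.intertwining_of_generators _ _ _ (fun j => ?_) (fun b => ?_) a
  · ext f idx
    simp only [LinearMap.comp_apply, ofCoind_apply, coindRep_apply, Idx.dualOf_mul_vtxA,
      hσ.vtxA_apply]
    split_ifs <;> simp
  · ext f ⟨x, _ | ⟨e, he⟩⟩
    · simp only [LinearMap.comp_apply, ofCoind_apply, coindRep_apply, hσ.arA_apply_none]
      simp only [Idx.dualOf, AlgA.vtxA_mul_arA]
      split_ifs <;> simp_all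
    · simp [hσ.arA_apply_some, Idx.dualOf, AlgA.arA_mul_arA]

theorem injective :
    letI := Module.compHom (Mspace k Q l) σ.toRingHom
    Module.Injective (AlgA k Q) (Mspace k Q l) :=
  injective_of_retract_coind σ (toCoind σ) (ofCoind k)
    (fun m => Finsupp.ext fun idx => hσ.dualOf_apply m idx)
    (fun a m x b => by simp)
    (fun a f => LinearMap.congr_fun (hσ.ofCoind_comp_coindRep a) f)

end IsStdAction

structure IsStdDiff (d : Mspace k Q l →ₗ[k] Mspace k Q (l + 1)) : Prop where
  map_mE : ∀ x, d (mE x) = 0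
  map_mA : ∀ x e he, d (mA x e he) = mE (x.preCons e he)

namespace IsStdDiff

variable {d : Mspace k Q l →ₗ[k] Mspace k Q (l + 1)} (hd : IsStdDiff d)
include hd

lemma apply_preCons (m : Mspace k Q l) (x : Lam0 Q l) (e : Q.E) (he : Q.t e = x.i) :
    d m ⟨x.preCons e he, none⟩ = m ⟨x, some ⟨e, he⟩⟩ := by
  classical
  have key : Finsupp.lapply ⟨x.preCons e he, none⟩ ∘ₗ d = Finsupp.lapply ⟨x, some ⟨e, he⟩⟩ :=
    hom_ext (fun y => by simp [hd.map_mE]) (fun y f hf => by simp [hd.map_mA, Lam0.preCons_inj])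
  exact LinearMap.congr_fun key m

lemma apply_some (m : Mspace k Q l) (y : Lam0 Q (l + 1)) (s : {e : Q.E // Q.t e = y.i}) :
    d m ⟨y, some s⟩ = 0 := by
  have key : Finsupp.lapply ⟨y, some s⟩ ∘ₗ d = 0 :=
    hom_ext (fun x => by simp [hd.map_mE]) (fun x e he => by simp [hd.map_mA])
  exact LinearMap.congr_fun key m

lemma ker_eq_socle : LinearMap.ker d = socle k Q l := by
  refine le_antisymm (fun m hm => ?_) ?_
  · refine (Finsupp.mem_supported' k m).mpr fun idx hidx => ?_
    rcases idx with ⟨x, _ | ⟨e, he⟩⟩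
    · exact absurd rfl hidx
    · rw [← hd.apply_preCons, LinearMap.mem_ker.mp hm, Finsupp.zero_apply]
  · rw [socle_eq_span, Submodule.span_le]
    rintro _ ⟨x, rfl⟩
    exact hd.map_mE x

lemma range_eq_socle : LinearMap.range d = socle k Q (l + 1) := by
  refine le_antisymm ?_ ?_
  · rintro _ ⟨m, rfl⟩
    refine (Finsupp.mem_supported' k _).mpr fun idx hidx => ?_
    rcases idx with ⟨y, _ | s⟩
    · exact absurd rfl hidx
    · exact hd.apply_some m y s
  · rw [socle_eq_span, Submodule.span_le]
    rintro _ ⟨y, rfl⟩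
    obtain ⟨x, e, he, rfl⟩ := Lam0.exists_eq_preCons y
    exact ⟨mA x e he, hd.map_mA x e he⟩

end IsStdDiff

variable (k Q) in
def ofVertices : (Q.V →₀ k) →ₗ[k] Mspace k Q 0 :=
  Finsupp.lmapDomain k k fun i => ⟨Lam0.nil i, none⟩

lemma ofVertices_single (i : Q.V) : ofVertices k Q (Finsupp.single i 1) = mE (Lam0.nil i) :=
  Finsupp.mapDomain_single

lemma ofVertices_injective : Function.Injective (ofVertices k Q) :=
  Finsupp.mapDomain_injective fun _ _ h => congrArg Lam0.i (Sigma.mk.inj_iff.mp h).1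

lemma range_ofVertices : LinearMap.range (ofVertices k Q) = socle k Q 0 := by
  rw [ofVertices, Finsupp.range_lmapDomain, socle_eq_span]
  exact congrArg _ (Lam0.nil_surjective.range_comp mE)

lemma ofVertices_comp {sW : AlgA k Q →ₐ[k] Module.End k (Q.V →₀ k)}
    (hsW1 : ∀ i j : Q.V, sW (vtxA k Q j) (Finsupp.single i 1) =
      if i = j then Finsupp.single i 1 else 0)
    (hsW2 : ∀ (e : Q.E) (i : Q.V), sW (arA k Q e) (Finsupp.single i 1) = 0)
    {σ : AlgA k Q →ₐ[k] Module.End k (Mspace k Q 0)} (hσ : IsStdAction σ) (a : AlgA k Q) :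
    ofVertices k Q ∘ₗ sW a = σ a ∘ₗ ofVertices k Q := by
  refine AlgA.intertwining_of_generators _ _ _ (fun j => ?_) (fun e => ?_) a <;>
    refine Finsupp.basisSingleOne.ext fun i => ?_
  · simp only [Finsupp.coe_basisSingleOne, LinearMap.comp_apply, hsW1, ofVertices_single,
      hσ.vtxA_mE, Lam0.nil_i]
    by_cases h : i = j <;> simp [h, ofVertices_single]
  · simp [hsW2, ofVertices_single, hσ.arA_mE]

end Mspace

/-- **An injective resolution of `kQ₀ = A/rad A` (Lemma 3.3).**  Let `Q` be a finite
quiver without sources and `A = kQ/J²`.  Consider the complex `M•` with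
`M^l = ⊕_{i ∈ Q₀} I_i^{(Λ^{l,0}_i)}` for `l ≥ 0` (and `0` for `l < 0`), where the
left `A`-module structure `σ` on each `M^l` is the one of a direct sum of the
injective envelopes `I_i = D(e_i A)`, and the `A`-linear differential `d` satisfies
`d^l(e_i^♯ ζ_{(e_i,q)}) = 0` and
`d^l(α^♯ ζ_{(e_i,q)}) = e_{s(α)}^♯ ζ_{(e_{s(α)}, qα)}`, and let `kQ₀ = Q₀ →₀ k` carry
the `A`-module structure `sW` with `e_j · e_i = δ_{ij} e_i` and `α · e_i = 0`.
Then `M•` is an injective resolution of `kQ₀`: each `M^l` is an injective `A`-module,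
`H⁰(M•) = Ker d⁰ ≅ kQ₀` as `A`-modules, and `H^l(M•) = 0` for `l ≠ 0`, i.e.
`Im d^l = Ker d^{l+1}` for all `l ≥ 0`. -/
theorem injective_resolution_of_semisimple_quotient (k : Type) [Field k] (Q : FQ)
    (sW : AlgA k Q →ₐ[k] Module.End k (Q.V →₀ k))
    (hsW1 : ∀ i j : Q.V, sW (vtxA k Q j) (Finsupp.single i 1) =
      if i = j then Finsupp.single i 1 else 0)
    (hsW2 : ∀ (e : Q.E) (i : Q.V), sW (arA k Q e) (Finsupp.single i 1) = 0)
    (σ : ∀ l : ℕ, AlgA k Q →ₐ[k] Module.End k (Mspace k Q l))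
    (hσ1 : ∀ (l : ℕ) (j : Q.V) (x : Lam0 Q l),
      σ l (vtxA k Q j) (mE x) = if x.i = j then mE x else 0)
    (hσ2 : ∀ (l : ℕ) (j : Q.V) (x : Lam0 Q l) (e : Q.E) (he : Q.t e = x.i),
      σ l (vtxA k Q j) (mA x e he) = if Q.s e = j then mA x e he else 0)
    (hσ3 : ∀ (l : ℕ) (b : Q.E) (x : Lam0 Q l), σ l (arA k Q b) (mE x) = 0)
    (hσ4 : ∀ (l : ℕ) (b : Q.E) (x : Lam0 Q l) (e : Q.E) (he : Q.t e = x.i),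
      σ l (arA k Q b) (mA x e he) = if b = e then mE x else 0)
    (d : ∀ l : ℕ, Mspace k Q l →ₗ[k] Mspace k Q (l + 1))
    (hd1 : ∀ (l : ℕ) (x : Lam0 Q l), d l (mE x) = 0)
    (hd2 : ∀ (l : ℕ) (x : Lam0 Q l) (e : Q.E) (he : Q.t e = x.i),
      d l (mA x e he) =
        mE (⟨Q.s e, x.b, QP.preCons e (QP.castSrc he.symm x.q),
          by simp [QP.length_preCons, QP.length_castSrc, x.len]⟩ : Lam0 Q (l + 1))) :
    (∀ l : ℕ,
      letI : Module (AlgA k Q) (Mspace k Q l) := Module.compHom _ (σ l).toRingHom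
      Module.Injective (AlgA k Q) (Mspace k Q l)) ∧
    (∃ φ : (Q.V →₀ k) →ₗ[k] Mspace k Q 0,
      Function.Injective φ ∧ LinearMap.range φ = LinearMap.ker (d 0) ∧
      ∀ (a : AlgA k Q) (w : Q.V →₀ k), φ (sW a w) = σ 0 a (φ w)) ∧
    (∀ l : ℕ, LinearMap.range (d l) = LinearMap.ker (d (l + 1))) := by
  have hσ l : Mspace.IsStdAction (σ l) := ⟨hσ1 l, hσ2 l, hσ3 l, hσ4 l⟩
  have hd l : Mspace.IsStdDiff (d l) := ⟨hd1 l, hd2 l⟩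
  refine ⟨fun l => (hσ l).injective, ?_, fun l => ?_⟩
  · refine ⟨Mspace.ofVertices k Q, Mspace.ofVertices_injective, ?_, fun a w => ?_⟩
    · rw [Mspace.range_ofVertices, (hd 0).ker_eq_socle]
    · exact LinearMap.congr_fun (Mspace.ofVertices_comp hsW1 hsW2 (hσ 0) a) w
  · rw [(hd l).range_eq_socle, (hd (l + 1)).ker_eq_socle]
end
end
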